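/- Consider robust median estimation with excess risk $R(\theta') = \mathbb{E}_{X\sim P}|X - \theta'|$ over distributions $P$ with $|\mathrm{med}(P)| \leq r$. For $\varepsilon \in (0,1)$, any estimator $\hat\theta$ based on samples from contaminated distributions satisfies: the minimax excess risk is at least $r\varepsilon/(2-\varepsilon)$. -/

import Mathlib

open MeasureTheory ENNReal

/-- Huber mixture `(1-ε) P + ε G`. -/
noncomputable def mix (ε : ℝ) (P G : Measure ℝ) : Measure ℝ :=
  ENNReal.ofReal (1 - ε) • P + ENNReal.ofReal ε • G

/-- The class of integrable distributions on `ℝ` whose median (a minimiser of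
`t ↦ E|X - t|`) lies in `[-r, r]`. -/
def medianClass (r : ℝ) : Set (Measure ℝ) :=
  {P | IsProbabilityMeasure P ∧ Integrable (fun x => x) P ∧
    ∃ m : ℝ, |m| ≤ r ∧ ∀ t : ℝ, (∫ x, |x - m| ∂P) ≤ ∫ x, |x - t| ∂P}

/-- Two-point measure. -/
noncomputable def tp (a b p q : ℝ) : Measure ℝ :=
  ENNReal.ofReal a • Measure.dirac p + ENNReal.ofReal b • Measure.dirac q

lemma dirac_integrable {f : ℝ → ℝ} (hf : Measurable f) (a : ℝ) :
    Integrable f (Measure.dirac a) := by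
  refine ⟨hf.aestronglyMeasurable, ?_⟩
  simp [HasFiniteIntegral, lintegral_dirac]

lemma tp_integrable {a b : ℝ} (p q : ℝ) {f : ℝ → ℝ} (hf : Measurable f) :
    Integrable f (tp a b p q) := by
  rw [tp, integrable_add_measure]
  exact ⟨(dirac_integrable hf p).smul_measure ofReal_ne_top,
    (dirac_integrable hf q).smul_measure ofReal_ne_top⟩

lemma tp_integral {a b : ℝ} (ha : 0 ≤ a) (hb : 0 ≤ b) (p q : ℝ) {f : ℝ → ℝ}
    (hf : Measurable f) :
    ∫ x, f x ∂(tp a b p q) = a * f p + b * f q := by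
  rw [tp, integral_add_measure ((dirac_integrable hf p).smul_measure ofReal_ne_top)
    ((dirac_integrable hf q).smul_measure ofReal_ne_top),
    integral_smul_measure, integral_smul_measure, integral_dirac, integral_dirac,
    toReal_ofReal ha, toReal_ofReal hb, smul_eq_mul, smul_eq_mul]

lemma tp_prob {a b : ℝ} (ha : 0 ≤ a) (hb : 0 ≤ b) (hab : a + b = 1) (p q : ℝ) :
    IsProbabilityMeasure (tp a b p q) := by
  constructor
  simp [tp, ← ofReal_add ha hb, hab]

lemma tp_compl_null (a b p q : ℝ) : (tp a b p q) ({p, q} : Set ℝ)ᶜ = 0 := by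
  have hm : MeasurableSet (({p, q} : Set ℝ)ᶜ) :=
    ((measurableSet_singleton q).insert p).compl
  simp [tp, Measure.dirac_apply' _ hm]

lemma abs_two_point (r t : ℝ) (hr : 0 ≤ r) : 2 * r ≤ |r - t| + |(-r) - t| := by
  have h4 := abs_add_le (r - t) (t + r)
  rw [show (r - t) + (t + r) = 2 * r by ring,
    abs_of_nonneg (by linarith : (0:ℝ) ≤ 2 * r)] at h4
  have e1 : (-r) - t = -(t + r) := by ring
  rw [e1, abs_neg]
  linarith

/-- Contamination lower bound for robust median estimation: for any estimator `θ̂` of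
the median based on `n` contaminated samples, some inlier `P` with `|med(P)| ≤ r` and
contamination `G` force expected excess risk at least `rε/(2-ε)`. -/
theorem robust_median_lower_bound (r ε : ℝ) (hr : 0 < r) (hε0 : 0 < ε) (hε1 : ε < 1)
    (n : ℕ) (θhat : (Fin n → ℝ) → ℝ) (hθhat : Measurable θhat) :
    ∃ P G : Measure ℝ, P ∈ medianClass r ∧ IsProbabilityMeasure G ∧
      r * ε / (2 - ε) ≤
        (∫ v, (∫ x, |x - θhat v| ∂P) ∂(Measure.pi fun _ : Fin n => mix ε P G))
          - ⨅ t : ℝ, ∫ x, |x - t| ∂P := by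
  classical
  have h2ε : (0:ℝ) < 2 - ε := by linarith
  set a : ℝ := 1 / (2 - ε) with ha_def
  set b : ℝ := (1 - ε) / (2 - ε) with hb_def
  have ha : 0 < a := by rw [ha_def]; exact div_pos one_pos h2ε
  have hb : 0 < b := by rw [hb_def]; exact div_pos (by linarith) h2ε
  have hab : a + b = 1 := by rw [ha_def, hb_def]; field_simp; ring
  have hba : b ≤ a := by
    rw [ha_def, hb_def]
    gcongr; linarith
  set R0 : Measure ℝ := tp a b r (-r) with hR0_def
  set R1 : Measure ℝ := tp b a r (-r) with hR1_def
  haveI hP0 : IsProbabilityMeasure R0 := tp_prob ha.le hb.le hab r (-r)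
  haveI hP1 : IsProbabilityMeasure R1 := tp_prob hb.le ha.le (by linarith) r (-r)
  have hmeas : ∀ t : ℝ, Measurable fun x : ℝ => |x - t| := fun t =>
    (measurable_id.sub measurable_const).abs
  have hE0 : ∀ t : ℝ, (∫ x, |x - t| ∂ R0) = a * |r - t| + b * |(-r) - t| := fun t =>
    tp_integral ha.le hb.le r (-r) (hmeas t)
  have hE1 : ∀ t : ℝ, (∫ x, |x - t| ∂ R1) = b * |r - t| + a * |(-r) - t| := fun t =>
    tp_integral hb.le ha.le r (-r) (hmeas t)
  have h1 : |r - r| = (0:ℝ) := by simp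
  have h2 : |(-r) - r| = 2 * r := by
    rw [show (-r) - r = -(2 * r) by ring, abs_neg, abs_of_nonneg (by linarith)]
  have h2' : |r - (-r)| = 2 * r := by
    rw [show r - (-r) = 2 * r by ring, abs_of_nonneg (by linarith)]
  have h1' : |(-r) - (-r)| = (0:ℝ) := by simp
  -- median class membership
  have mem0 : R0 ∈ medianClass r := by
    refine ⟨hP0, tp_integrable _ _ measurable_id, r, by rw [abs_of_pos hr], fun t => ?_⟩
    rw [hE0 r, hE0 t, h1, h2]
    have h3 := abs_two_point r t hr.le
    nlinarith [abs_nonneg (r - t), abs_nonneg ((-r) - t)]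
  have mem1 : R1 ∈ medianClass r := by
    refine ⟨hP1, tp_integrable _ _ measurable_id, -r, by rw [abs_neg, abs_of_pos hr], fun t => ?_⟩
    rw [hE1 (-r), hE1 t, h1', h2']
    have h3 := abs_two_point r t hr.le
    nlinarith [abs_nonneg (r - t), abs_nonneg ((-r) - t)]
  -- mixture identities
  have hmix0 : mix ε R0 R0 = R0 := by
    rw [mix, ← add_smul, ← ofReal_add (by linarith) hε0.le,
      show (1 - ε) + ε = 1 by ring, ofReal_one, one_smul]
  have hmix1 : mix ε R1 (Measure.dirac r) = R0 := by
    have e1 : (1 - ε) * b + ε = a := by rw [ha_def, hb_def]; field_simp; ring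
    have e2 : (1 - ε) * a = b := by rw [ha_def, hb_def]; field_simp
    rw [mix, hR1_def, hR0_def, tp, tp, smul_add, smul_smul, smul_smul,
      ← ofReal_mul (by linarith), ← ofReal_mul (by linarith), e2, add_right_comm,
      ← add_smul, ← ofReal_add (mul_nonneg (by linarith) hb.le) hε0.le, e1]
  -- the sampling measure
  set μ : Measure ((Fin n) → ℝ) := Measure.pi fun _ : Fin n => R0 with hμ_def
  haveI hμP : IsProbabilityMeasure μ := by rw [hμ_def]; infer_instance
  -- a.e. support
  set s : Set ℝ := {r, -r} with hs_def
  have hs : MeasurableSet s := (measurableSet_singleton (-r)).insert r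
  have hRs : R0 s = 1 := by
    have hc := tp_compl_null a b r (-r)
    have h := measure_add_measure_compl (μ := R0) hs
    rw [← hR0_def] at hc
    rw [hc, add_zero, measure_univ] at h
    exact h
  set A : Set ((Fin n) → ℝ) := Set.univ.pi fun _ : Fin n => s with hA_def
  have hA : MeasurableSet A := MeasurableSet.univ_pi fun _ => hs
  have hμA : μ A = 1 := by rw [hμ_def, hA_def, Measure.pi_pi]; simp [hRs]
  have hae : ∀ᵐ v ∂μ, v ∈ A := by
    have hμAc : μ Aᶜ = 0 := by
      rw [measure_compl hA (measure_ne_top _ _), hμA, measure_univ, tsub_self]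
    exact (ae_iff (p := fun v => v ∈ A)).2 (by exact hμAc)
  -- bound the estimator on the support
  set T : Finset ((Fin n) → ℝ) :=
    Finset.image (fun c : Fin n → Bool => fun i => if c i then r else -r) Finset.univ with hT_def
  have hTne : T.Nonempty := Finset.Nonempty.image ⟨fun _ => true, Finset.mem_univ _⟩ _
  set C : ℝ := T.sup' hTne fun v => |θhat v| with hC_def
  have hbound : ∀ v ∈ A, |θhat v| ≤ C := by
    intro v hv
    have hvT : v ∈ T := by
      rw [hT_def, Finset.mem_image]
      refine ⟨fun i => if v i = r then true else false, Finset.mem_univ _, funext fun i => ?_⟩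
      have hvi : v i ∈ s := hv i (Set.mem_univ i)
      rcases hvi with h | h
      · simp [h]
      · have hne : v i ≠ r := by
          rw [Set.mem_singleton_iff] at h
          rw [h]; intro hc; linarith
        simp only [if_neg hne, if_neg (by trivial : ¬False)]
        rw [Set.mem_singleton_iff] at h
        simp [h]
    exact Finset.le_sup' (fun v => |θhat v|) hvT
  have hθI : Integrable θhat μ :=
    Integrable.mono' (integrable_const C) hθhat.aestronglyMeasurable
      (hae.mono fun v hv => by rw [Real.norm_eq_abs]; exact hbound v hv)
  have hI0 : Integrable (fun v => a * |r - θhat v| + b * |(-r) - θhat v|) μ :=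
    ((((integrable_const r).sub hθI).abs).const_mul a).add
      ((((integrable_const (-r)).sub hθI).abs).const_mul b)
  have hI1 : Integrable (fun v => b * |r - θhat v| + a * |(-r) - θhat v|) μ :=
    ((((integrable_const r).sub hθI).abs).const_mul b).add
      ((((integrable_const (-r)).sub hθI).abs).const_mul a)
  have hsum : 2 * r ≤ (∫ v, (a * |r - θhat v| + b * |(-r) - θhat v|) ∂μ)
      + ∫ v, (b * |r - θhat v| + a * |(-r) - θhat v|) ∂μ := by
    rw [← integral_add hI0 hI1]
    have hc2 : (∫ _ : (Fin n) → ℝ, (2 * r : ℝ) ∂μ) = 2 * r := by simp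
    rw [← hc2]
    refine integral_mono (integrable_const _) (hI0.add hI1) fun v => ?_
    have h3 := abs_two_point r (θhat v) hr.le
    show 2 * r ≤ a * |r - θhat v| + b * |(-r) - θhat v|
      + (b * |r - θhat v| + a * |(-r) - θhat v|)
    nlinarith [abs_nonneg (r - θhat v), abs_nonneg ((-r) - θhat v)]
  have hkey : r * ε / (2 - ε) = r - b * (2 * r) := by rw [hb_def]; field_simp; ring
  rcases le_or_gt r (∫ v, (a * |r - θhat v| + b * |(-r) - θhat v|) ∂μ) with hc | hc
  · -- use P = R0, G = R0
    refine ⟨R0, R0, mem0, hP0, ?_⟩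
    rw [hmix0, ← hμ_def]
    simp only [hE0]
    have hbdd : BddBelow (Set.range fun t : ℝ => a * |r - t| + b * |(-r) - t|) := by
      refine ⟨0, ?_⟩; rintro x ⟨t, rfl⟩; positivity
    have hinf : (⨅ t : ℝ, (a * |r - t| + b * |(-r) - t|)) ≤ b * (2 * r) := by
      have := ciInf_le hbdd r
      rwa [h1, h2, mul_zero, zero_add] at this
    linarith
  · -- use P = R1, G = dirac r
    have hc1 : r ≤ ∫ v, (b * |r - θhat v| + a * |(-r) - θhat v|) ∂μ := by linarith
    refine ⟨R1, Measure.dirac r, mem1, Measure.dirac.isProbabilityMeasure, ?_⟩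
    rw [hmix1, ← hμ_def]
    simp only [hE1]
    have hbdd : BddBelow (Set.range fun t : ℝ => b * |r - t| + a * |(-r) - t|) := by
      refine ⟨0, ?_⟩; rintro x ⟨t, rfl⟩; positivity
    have hinf : (⨅ t : ℝ, (b * |r - t| + a * |(-r) - t|)) ≤ b * (2 * r) := by
      have := ciInf_le hbdd (-r)
      rwa [h1', h2', mul_zero, add_zero] at this
    linarith
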